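/- arXiv:1212.1251 — 2 statements merged into one kernel-verified Lean document; each statement's English description precedes it below -/
import Mathlib

section
/- Let a finite DTMDP with uniformisation rate q > 0, time bound t ≥ 0, reward structure (c, f) and ε > 0 be given, and let k ∈ ℕ be ε-sufficient. Then for every counting randomised (CR) scheduler σ and every initial state s0, the value-iteration output satisfies |q_0(s0) − V(σ, s0)| < ε, where q_0 is the value-iteration vector of σ at index 0 (computed down from q_{k+1} ≡ 0); moreover 0 ≤ V(σ, s0) − q_0(s0). -/
open scoped BigOperators

namespace TR

variable {S A : Type} [Fintype S] [Fintype A] [DecidableEq S] [DecidableEq A]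

/-- Poisson probabilities `φ_λ(i) = λ^i/i! · e^{−λ}`. -/
noncomputable def phi (lam : ℝ) (i : ℕ) : ℝ :=
  lam ^ i / (Nat.factorial i : ℝ) * Real.exp (-lam)

/-- `ψ_λ(i) = 1 − Σ_{j=0}^{i} φ_λ(j)`. -/
noncomputable def psi (lam : ℝ) (i : ℕ) : ℝ :=
  1 - ∑ j ∈ Finset.range (i + 1), phi lam j

/-- Action `a` is enabled in state `s`. -/
def Enabled (P : S → A → S → ℝ) (s : S) (a : A) : Prop :=
  ∑ s', P s a s' = 1

/-- `P` is the transition function of a finite DTMDP. -/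
def IsDTMDP (P : S → A → S → ℝ) : Prop :=
  (∀ s a s', 0 ≤ P s a s') ∧
  (∀ s a, (∑ s', P s a s') = 0 ∨ (∑ s', P s a s') = 1) ∧
  (∀ s, ∃ a, Enabled P s a)

/-- History-dependent randomised scheduler.  A history is encoded as a pair of
a list of (state, action) pairs (most recent first) and the current state. -/
def IsHR (P : S → A → S → ℝ) (sch : List (S × A) × S → A → ℝ) : Prop :=
  (∀ h a, 0 ≤ sch h a) ∧ (∀ h, ∑ a, sch h a = 1) ∧
  (∀ h a, 0 < sch h a → Enabled P h.2 a)

/-- Probability of the path recorded in the given history (of length `n`,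
starting at `s0`) under the HR scheduler `sch`. -/
noncomputable def hrHistProb (P : S → A → S → ℝ) (sch : List (S × A) × S → A → ℝ)
    (s0 : S) : ℕ → List (S × A) × S → ℝ
  | 0, h => if h.1 = [] ∧ h.2 = s0 then 1 else 0
  | _ + 1, ([], _) => 0
  | n + 1, ((s, a) :: rest, s') =>
      hrHistProb P sch s0 n (rest, s) * sch (rest, s) a * P s a s'

/-- Transient probability `tprob^σ(s0, n, s)`: total probability of all paths of
length `n` from `s0` ending in `s`. -/
noncomputable def hrProb (P : S → A → S → ℝ) (sch : List (S × A) × S → A → ℝ)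
    (s0 : S) (n : ℕ) (s : S) : ℝ :=
  ∑' l : List (S × A), hrHistProb P sch s0 n (l, s)

/-- Counting randomised scheduler. -/
def IsCR (P : S → A → S → ℝ) (sch : S → ℕ → A → ℝ) : Prop :=
  (∀ s n a, 0 ≤ sch s n a) ∧ (∀ s n, ∑ a, sch s n a = 1) ∧
  (∀ s n a, 0 < sch s n a → Enabled P s a)

/-- Transient distribution of a CR scheduler. -/
noncomputable def crProb (P : S → A → S → ℝ) (sch : S → ℕ → A → ℝ) (s0 : S) :
    ℕ → S → ℝ
  | 0 => fun s => if s = s0 then 1 else 0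
  | n + 1 => fun s' => ∑ s, crProb P sch s0 n s * ∑ a, sch s n a * P s a s'

/-- Counting deterministic scheduler. -/
def IsCD (P : S → A → S → ℝ) (d : S → ℕ → A) : Prop :=
  ∀ s n, Enabled P s (d s n)

/-- Transient distribution of a CD scheduler. -/
noncomputable def cdProb (P : S → A → S → ℝ) (d : S → ℕ → A) (s0 : S) :
    ℕ → S → ℝ
  | 0 => fun s => if s = s0 then 1 else 0
  | n + 1 => fun s' => ∑ s, cdProb P d s0 n s * P s (d s n) s'

/-- The value `V = Σ_i [ φ_{qt}(i)·Σ_s p_i(s)·f(s) + ψ_{qt}(i)·Σ_s p_i(s)·c(s)/q ]`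
of transient distributions `p` w.r.t. uniformisation rate `q`, time bound `t`
and rewards `(c, f)`. -/
noncomputable def value (q t : ℝ) (c f : S → ℝ) (p : ℕ → S → ℝ) : ℝ :=
  ∑' i : ℕ, (phi (q * t) i * ∑ s, p i s * f s
    + psi (q * t) i * ∑ s, p i s * (c s / q))

/-- Value-iteration vectors of a CR scheduler: `crVI … k j` is `q_{k+1-j}`,
i.e. `crVI … k 0 = q_{k+1} ≡ 0` and `crVI … k (k+1) = q_0`. -/
noncomputable def crVI (P : S → A → S → ℝ) (sch : S → ℕ → A → ℝ)
    (q t : ℝ) (c f : S → ℝ) (k : ℕ) : ℕ → S → ℝ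
  | 0 => fun _ => 0
  | j + 1 => fun s =>
      (∑ a, sch s (k - j) a * ∑ s', P s a s' * crVI P sch q t c f k j s')
      + phi (q * t) (k - j) * f s + psi (q * t) (k - j) * (c s / q)

/-- Maximising value-iteration vectors: `maxVI … k j` is `q'_{k+1-j}`,
i.e. `maxVI … k 0 = q'_{k+1} ≡ 0` and `maxVI … k (k+1) = q'_0`. -/
noncomputable def maxVI (P : S → A → S → ℝ)
    (q t : ℝ) (c f : S → ℝ) (k : ℕ) : ℕ → S → ℝ
  | 0 => fun _ => 0
  | j + 1 => fun s =>
      sSup {x : ℝ | ∃ a, Enabled P s a ∧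
        x = ∑ s', P s a s' * maxVI P q t c f k j s'}
      + phi (q * t) (k - j) * f s + psi (q * t) (k - j) * (c s / q)

/-- Maximum of a real-valued function on a finite nonempty type. -/
noncomputable def maxOf [Nonempty S] (g : S → ℝ) : ℝ :=
  Finset.univ.sup' Finset.univ_nonempty g

/-- `k` is `ε`-sufficient: `Σ_{n=0}^{k} ψ_{qt}(n) > qt − ε·q/(2·max_s c(s))`
(dropped if `max_s c(s) = 0`) and `ψ_{qt}(k)·max_s f(s) < ε/2`. -/
def EpsSufficient [Nonempty S] (q t : ℝ) (c f : S → ℝ) (ε : ℝ) (k : ℕ) : Prop :=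
  (maxOf c = 0 ∨
    (∑ n ∈ Finset.range (k + 1), psi (q * t) n) > q * t - ε * q / (2 * maxOf c)) ∧
  psi (q * t) k * maxOf f < ε / 2

/-- `n`-step transition probabilities (matrix powers) of a stochastic matrix. -/
noncomputable def matPow (P : S → S → ℝ) : ℕ → S → S → ℝ
  | 0 => fun s s' => if s = s' then 1 else 0
  | n + 1 => fun s s' => ∑ s'', matPow P n s s'' * P s'' s'

/-- `part` is a partition of the finite state set `S`. -/
def IsPartition (part : Finset (Finset S)) : Prop :=
  (∀ z ∈ part, z.Nonempty) ∧ (∀ s : S, ∃ z ∈ part, s ∈ z) ∧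
  (∀ z ∈ part, ∀ z' ∈ part, z ≠ z' → Disjoint z z')

/-- Abstraction DTMDP of a stochastic matrix w.r.t. a partition: states are
blocks, actions are concrete states, `P̄(z, s, z') = Σ_{s' ∈ z'} P(s,s')` if
`s ∈ z` and `0` otherwise. -/
noncomputable def abst (P : S → S → ℝ) (part : Finset (Finset S)) :
    {z // z ∈ part} → S → {z // z ∈ part} → ℝ :=
  fun z s z' => if s ∈ z.1 then ∑ s' ∈ z'.1, P s s' else 0


end TR

/-!
Write the value as `∑ₙ valueTerm n`. Pairing the value-iteration vector `q_i` with the transient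
distribution `p_i` and running the two recursions against each other gives
`q₀(s₀) = ∑_{n ≤ k} valueTerm n`, so the error is the nonnegative tail `∑_{n > k} valueTerm n`.
Since `p_n` is a distribution, this tail is at most
`ψ(k) · max f + (∑_{n > k} ψ(n)) · max c / q`, and `∑ₙ ψ_λ(n) = ∑ⱼ j φ_λ(j) = λ` (the Poisson mean)
turns ε-sufficiency into a bound of `ε/2` on each of the two parts.
-/

namespace TR

section Poisson

variable {lam : ℝ}

lemma phi_nonneg (h : 0 ≤ lam) (i : ℕ) : 0 ≤ phi lam i := by
  unfold phi; positivity

lemma hasSum_phi (lam : ℝ) : HasSum (phi lam) 1 := by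
  have h := (NormedSpace.expSeries_div_hasSum_exp lam).mul_right (Real.exp (-lam))
  rwa [← Real.exp_eq_exp_ℝ, ← Real.exp_add, add_neg_cancel, Real.exp_zero] at h

lemma psi_eq_tsum (lam : ℝ) (i : ℕ) : psi lam i = ∑' j, phi lam (j + (i + 1)) := by
  have h := (hasSum_phi lam).summable.sum_add_tsum_nat_add (i + 1)
  rw [(hasSum_phi lam).tsum_eq] at h
  unfold psi; linarith

lemma psi_nonneg (h : 0 ≤ lam) (i : ℕ) : 0 ≤ psi lam i := by
  rw [psi_eq_tsum]
  exact tsum_nonneg fun j => phi_nonneg h _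

lemma psi_eq_psi_succ_add_phi (lam : ℝ) (i : ℕ) :
    psi lam i = psi lam (i + 1) + phi lam (i + 1) := by
  unfold psi
  rw [Finset.sum_range_succ (n := i + 1)]
  ring

lemma hasSum_natCast_mul_phi (lam : ℝ) : HasSum (fun j : ℕ => (j : ℝ) * phi lam j) lam := by
  have shift : (fun j : ℕ => ((j + 1 : ℕ) : ℝ) * phi lam (j + 1)) = fun j => lam * phi lam j := by
    funext j
    have : (j.factorial : ℝ) ≠ 0 := Nat.cast_ne_zero.2 (Nat.factorial_ne_zero j)
    simp only [phi, pow_succ, Nat.factorial_succ]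
    push_cast
    field_simp
  have h : HasSum (fun j : ℕ => ((j + 1 : ℕ) : ℝ) * phi lam (j + 1)) lam := by
    rw [shift]; simpa using (hasSum_phi lam).mul_left lam
  simpa using (hasSum_nat_add_iff (f := fun j : ℕ => (j : ℝ) * phi lam j) 1).1 h

lemma sum_range_psi (lam : ℝ) (m : ℕ) :
    ∑ n ∈ Finset.range (m + 1), psi lam n
      = ∑ j ∈ Finset.range (m + 1), (j : ℝ) * phi lam j + ((m : ℝ) + 1) * psi lam m := by
  induction m with
  | zero => simp
  | succ m ih =>
    rw [Finset.sum_range_succ (n := m + 1), ih, Finset.sum_range_succ (n := m + 1),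
      psi_eq_psi_succ_add_phi lam m]
    push_cast
    ring

lemma succ_mul_psi_le_tsum (h : 0 ≤ lam) (m : ℕ) :
    ((m : ℝ) + 1) * psi lam m ≤ ∑' j, ((j + (m + 1) : ℕ) : ℝ) * phi lam (j + (m + 1)) := by
  rw [psi_eq_tsum, ← tsum_mul_left]
  refine Summable.tsum_le_tsum (fun j => ?_)
    (((summable_nat_add_iff (m + 1)).2 (hasSum_phi lam).summable).mul_left _)
    ((summable_nat_add_iff (f := fun j : ℕ => (j : ℝ) * phi lam j) (m + 1)).2
      (hasSum_natCast_mul_phi lam).summable)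
  gcongr
  · exact phi_nonneg h _
  · push_cast; linarith [Nat.cast_nonneg (α := ℝ) j]

lemma sum_range_psi_le (h : 0 ≤ lam) (N : ℕ) : ∑ n ∈ Finset.range N, psi lam n ≤ lam := by
  cases N with
  | zero => simpa using h
  | succ m =>
    have tail := (hasSum_natCast_mul_phi lam).summable.sum_add_tsum_nat_add (m + 1)
    rw [(hasSum_natCast_mul_phi lam).tsum_eq] at tail
    rw [sum_range_psi]
    linarith [succ_mul_psi_le_tsum h m]

lemma summable_psi (h : 0 ≤ lam) : Summable (psi lam) :=
  summable_of_sum_range_le (psi_nonneg h) (sum_range_psi_le h)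

lemma tsum_psi_nat_add_le (h : 0 ≤ lam) (m : ℕ) :
    ∑' n, psi lam (n + m) ≤ lam - ∑ n ∈ Finset.range m, psi lam n := by
  have split := (summable_psi h).sum_add_tsum_nat_add m
  linarith [Real.tsum_le_of_sum_range_le (psi_nonneg h) (sum_range_psi_le h)]

end Poisson

section Scheduler

variable {S A : Type} [Fintype S] [Fintype A] {P : S → A → S → ℝ} {sch : S → ℕ → A → ℝ}

lemma crProb_nonneg [DecidableEq S] (hP : IsDTMDP P) (hsch : IsCR P sch) (s0 : S) (n : ℕ)
    (s : S) : 0 ≤ crProb P sch s0 n s := by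
  induction n generalizing s with
  | zero => simp only [crProb]; split <;> norm_num
  | succ n ih =>
    exact Finset.sum_nonneg fun s' _ => mul_nonneg (ih s') <|
      Finset.sum_nonneg fun a _ => mul_nonneg (hsch.1 s' n a) (hP.1 s' a s)

lemma IsCR.mul_sum_transition (hsch : IsCR P sch) (s : S) (n : ℕ) (a : A) :
    sch s n a * ∑ s', P s a s' = sch s n a := by
  rcases (hsch.1 s n a).eq_or_lt with h | h
  · rw [← h, zero_mul]
  · rw [hsch.2.2 s n a h, mul_one]

lemma sum_crProb_mul_transition [DecidableEq S] (s0 : S) (n : ℕ) (g : S → ℝ) :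
    ∑ s, crProb P sch s0 n s * ∑ a, sch s n a * ∑ s', P s a s' * g s'
      = ∑ s', crProb P sch s0 (n + 1) s' * g s' := by
  simp only [crProb, Finset.mul_sum, Finset.sum_mul, mul_assoc]
  conv_lhs => enter [2, s]; rw [Finset.sum_comm]
  exact Finset.sum_comm

lemma sum_crProb_eq_one [DecidableEq S] (hsch : IsCR P sch) (s0 : S) (n : ℕ) :
    ∑ s, crProb P sch s0 n s = 1 := by
  induction n with
  | zero => simp [crProb]
  | succ n ih =>
    have step := sum_crProb_mul_transition (P := P) (sch := sch) s0 n fun _ => (1 : ℝ)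
    simp only [mul_one, hsch.mul_sum_transition, hsch.2.1] at step
    rw [← step, ih]

end Scheduler

section Value

variable {S : Type} [Fintype S]

noncomputable def valueTerm (q t : ℝ) (c f : S → ℝ) (p : ℕ → S → ℝ) (i : ℕ) : ℝ :=
  phi (q * t) i * ∑ s, p i s * f s + psi (q * t) i * ∑ s, p i s * (c s / q)

lemma value_eq_tsum_valueTerm (q t : ℝ) (c f : S → ℝ) (p : ℕ → S → ℝ) :
    value q t c f p = ∑' i, valueTerm q t c f p i :=
  rfl

/-- With `i + j = k + 1`, `crVI … k j` is the vector `q_i`. -/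
lemma sum_crProb_mul_crVI {A : Type} [Fintype A] [DecidableEq S]
    (P : S → A → S → ℝ) (sch : S → ℕ → A → ℝ) (q t : ℝ) (c f : S → ℝ) (s0 : S) (k : ℕ) :
    ∀ i j, i + j = k + 1 →
      ∑ s, crProb P sch s0 i s * crVI P sch q t c f k j s
        = ∑ n ∈ Finset.Ico i (k + 1), valueTerm q t c f (crProb P sch s0) n := by
  intro i j
  induction j generalizing i with
  | zero => intro h; simp [crVI, show i = k + 1 by omega]
  | succ j ih =>
    intro h
    have hi : k - j = i := by omega
    rw [Finset.sum_eq_sum_Ico_succ_bot (by omega), ← ih (i + 1) (by omega),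
      ← sum_crProb_mul_transition]
    simp only [crVI, hi, valueTerm, mul_add, Finset.sum_add_distrib, Finset.mul_sum _ _ (phi _ _),
      Finset.mul_sum _ _ (psi _ _), mul_left_comm (crProb P sch s0 i _)]
    ring

lemma crVI_eq_sum_valueTerm {A : Type} [Fintype A] [DecidableEq S]
    (P : S → A → S → ℝ) (sch : S → ℕ → A → ℝ) (q t : ℝ) (c f : S → ℝ) (s0 : S) (k : ℕ) :
    crVI P sch q t c f k (k + 1) s0
      = ∑ n ∈ Finset.range (k + 1), valueTerm q t c f (crProb P sch s0) n := by
  rw [Finset.range_eq_Ico, ← sum_crProb_mul_crVI P sch q t c f s0 k 0 (k + 1) (zero_add _)]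
  simp [crProb]

lemma le_maxOf [Nonempty S] (g : S → ℝ) (s : S) : g s ≤ maxOf g :=
  Finset.le_sup' g (Finset.mem_univ s)

lemma sum_mul_le_maxOf [Nonempty S] {w : S → ℝ} (hw0 : ∀ s, 0 ≤ w s) (hw1 : ∑ s, w s = 1)
    (g : S → ℝ) : ∑ s, w s * g s ≤ maxOf g :=
  calc ∑ s, w s * g s ≤ ∑ s, w s * maxOf g :=
        Finset.sum_le_sum fun s _ => mul_le_mul_of_nonneg_left (le_maxOf g s) (hw0 s)
    _ = maxOf g := by rw [← Finset.sum_mul, hw1, one_mul]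

lemma maxOf_nonneg [Nonempty S] {g : S → ℝ} (hg : ∀ s, 0 ≤ g s) : 0 ≤ maxOf g :=
  (hg _).trans (le_maxOf g (Classical.arbitrary S))

variable {q t : ℝ} {c f : S → ℝ} {p : ℕ → S → ℝ}

lemma valueTerm_nonneg (hq : 0 ≤ q) (ht : 0 ≤ t) (hc : ∀ s, 0 ≤ c s) (hf : ∀ s, 0 ≤ f s)
    (hp : ∀ n s, 0 ≤ p n s) (n : ℕ) : 0 ≤ valueTerm q t c f p n := by
  have hqt := mul_nonneg hq ht
  exact add_nonneg
    (mul_nonneg (phi_nonneg hqt n) (Finset.sum_nonneg fun s _ => mul_nonneg (hp n s) (hf s)))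
    (mul_nonneg (psi_nonneg hqt n)
      (Finset.sum_nonneg fun s _ => mul_nonneg (hp n s) (div_nonneg (hc s) hq)))

lemma valueTerm_le [Nonempty S] (hq : 0 ≤ q) (ht : 0 ≤ t) (hp0 : ∀ n s, 0 ≤ p n s)
    (hp1 : ∀ n, ∑ s, p n s = 1) (n : ℕ) :
    valueTerm q t c f p n ≤ phi (q * t) n * maxOf f + psi (q * t) n * (maxOf c / q) := by
  have hqt := mul_nonneg hq ht
  have hc : ∑ s, p n s * (c s / q) ≤ maxOf c / q := by
    simp only [← mul_div_assoc, ← Finset.sum_div]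
    exact div_le_div_of_nonneg_right (sum_mul_le_maxOf (hp0 n) (hp1 n) c) hq
  unfold valueTerm
  gcongr
  · exact phi_nonneg hqt n
  · exact sum_mul_le_maxOf (hp0 n) (hp1 n) f
  · exact psi_nonneg hqt n

lemma summable_valueTerm [Nonempty S] (hq : 0 ≤ q) (ht : 0 ≤ t) (hc : ∀ s, 0 ≤ c s)
    (hf : ∀ s, 0 ≤ f s) (hp0 : ∀ n s, 0 ≤ p n s) (hp1 : ∀ n, ∑ s, p n s = 1) :
    Summable (valueTerm q t c f p) :=
  Summable.of_nonneg_of_le (valueTerm_nonneg hq ht hc hf hp0) (valueTerm_le hq ht hp0 hp1)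
    (((hasSum_phi _).summable.mul_right _).add
      ((summable_psi (mul_nonneg hq ht)).mul_right _))

lemma tsum_valueTerm_nat_add_le [Nonempty S] (hq : 0 ≤ q) (ht : 0 ≤ t) (hc : ∀ s, 0 ≤ c s)
    (hf : ∀ s, 0 ≤ f s) (hp0 : ∀ n s, 0 ≤ p n s) (hp1 : ∀ n, ∑ s, p n s = 1) (m : ℕ) :
    ∑' n, valueTerm q t c f p (n + (m + 1))
      ≤ psi (q * t) m * maxOf f
        + (q * t - ∑ n ∈ Finset.range (m + 1), psi (q * t) n) * (maxOf c / q) := by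
  have hqt := mul_nonneg hq ht
  have hphi := (summable_nat_add_iff (m + 1)).2 (hasSum_phi (q * t)).summable
  have hpsi := (summable_nat_add_iff (m + 1)).2 (summable_psi hqt)
  have hMc : 0 ≤ maxOf c / q := div_nonneg (maxOf_nonneg hc) hq
  calc ∑' n, valueTerm q t c f p (n + (m + 1))
      ≤ ∑' n, (phi (q * t) (n + (m + 1)) * maxOf f
          + psi (q * t) (n + (m + 1)) * (maxOf c / q)) :=
        Summable.tsum_le_tsum (fun n => valueTerm_le hq ht hp0 hp1 _)
          ((summable_nat_add_iff (m + 1)).2 (summable_valueTerm hq ht hc hf hp0 hp1))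
          ((hphi.mul_right _).add (hpsi.mul_right _))
    _ = psi (q * t) m * maxOf f + (∑' n, psi (q * t) (n + (m + 1))) * (maxOf c / q) := by
        rw [(hphi.mul_right _).tsum_add (hpsi.mul_right _), tsum_mul_right, tsum_mul_right,
          ← psi_eq_tsum]
    _ ≤ _ := by gcongr; exact tsum_psi_nat_add_le hqt _

lemma value_sub_sum_range_valueTerm (hp : Summable (valueTerm q t c f p)) (m : ℕ) :
    value q t c f p - ∑ n ∈ Finset.range m, valueTerm q t c f p n
      = ∑' n, valueTerm q t c f p (n + m) := by
  rw [value_eq_tsum_valueTerm, ← hp.sum_add_tsum_nat_add m]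
  ring

lemma EpsSufficient.error_bound_lt [Nonempty S] {ε : ℝ} {k : ℕ} (hq : 0 < q)
    (hc : ∀ s, 0 ≤ c s) (hε : 0 < ε) (hk : EpsSufficient q t c f ε k) :
    psi (q * t) k * maxOf f
      + (q * t - ∑ n ∈ Finset.range (k + 1), psi (q * t) n) * (maxOf c / q) < ε := by
  have hc_tail : (q * t - ∑ n ∈ Finset.range (k + 1), psi (q * t) n) * (maxOf c / q) < ε / 2 := by
    rcases (maxOf_nonneg hc).eq_or_lt with hM | hM
    · rw [← hM, zero_div, mul_zero]; positivity
    · have hsum := hk.1.resolve_left hM.ne'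
      calc _ < ε * q / (2 * maxOf c) * (maxOf c / q) := by gcongr; linarith
        _ = ε / 2 := by field_simp
  linarith [hk.2]

end Value

theorem stmt9_general {S A : Type} [Fintype S] [Nonempty S] [Fintype A]
    [DecidableEq S]
    (P : S → A → S → ℝ) (hP : IsDTMDP P)
    (q t : ℝ) (hq : 0 < q) (ht : 0 ≤ t)
    (c f : S → ℝ) (hc : ∀ s, 0 ≤ c s) (hf : ∀ s, 0 ≤ f s)
    (ε : ℝ) (hε : 0 < ε) (k : ℕ) (hk : EpsSufficient q t c f ε k)
    (sch : S → ℕ → A → ℝ) (hsch : IsCR P sch) :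
    ∀ s0 : S,
      |crVI P sch q t c f k (k + 1) s0 - value q t c f (crProb P sch s0)| < ε ∧
      0 ≤ value q t c f (crProb P sch s0) - crVI P sch q t c f k (k + 1) s0 := by
  intro s0
  have hp0 := crProb_nonneg hP hsch s0
  have hp1 := sum_crProb_eq_one hsch s0
  have htail : value q t c f (crProb P sch s0) - crVI P sch q t c f k (k + 1) s0
      = ∑' n, valueTerm q t c f (crProb P sch s0) (n + (k + 1)) := by
    rw [crVI_eq_sum_valueTerm, value_sub_sum_range_valueTerm
      (summable_valueTerm hq.le ht hc hf hp0 hp1)]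
  have htail_nonneg : 0 ≤ ∑' n, valueTerm q t c f (crProb P sch s0) (n + (k + 1)) :=
    tsum_nonneg fun n => valueTerm_nonneg hq.le ht hc hf hp0 _
  have htail_lt : ∑' n, valueTerm q t c f (crProb P sch s0) (n + (k + 1)) < ε :=
    (tsum_valueTerm_nat_add_le hq.le ht hc hf hp0 hp1 k).trans_lt
      (hk.error_bound_lt hq hc hε)
  rw [abs_sub_comm, htail, abs_of_nonneg htail_nonneg]
  exact ⟨htail_lt, htail_nonneg⟩

/-- for an ε-sufficient `k`, value iteration for a CR scheduler
(`crVI … k (k+1)` is `q_0`) approximates its value from below within `ε`. -/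
theorem stmt9 {S A : Type} [Fintype S] [Nonempty S] [Fintype A]
    [DecidableEq S] [DecidableEq A]
    (P : S → A → S → ℝ) (hP : IsDTMDP P)
    (q t : ℝ) (hq : 0 < q) (ht : 0 ≤ t)
    (c f : S → ℝ) (hc : ∀ s, 0 ≤ c s) (hf : ∀ s, 0 ≤ f s)
    (ε : ℝ) (hε : 0 < ε) (k : ℕ) (hk : EpsSufficient q t c f ε k)
    (sch : S → ℕ → A → ℝ) (hsch : IsCR P sch) :
    ∀ s0 : S,
      |crVI P sch q t c f k (k + 1) s0 - value q t c f (crProb P sch s0)| < ε ∧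
      0 ≤ value q t c f (crProb P sch s0) - crVI P sch q t c f k (k + 1) s0 :=
  stmt9_general P hP q t hq ht c f hc hf ε hε k hk sch hsch

end TR
end

section
/- Let P be a stochastic matrix on a finite state set S (the embedded DTMC of a uniform CTMC), let 𝒫 be a partition of S, and consider the abstraction DTMDP of (P, 𝒫). Then for every initial state s0, with z0 ∈ 𝒫 the block containing s0, there exists a history-dependent randomised (HR) scheduler σ of the abstraction DTMDP such that for every n ∈ ℕ and every block z ∈ 𝒫, the scheduled transient probability matches the lumped concrete one: tprob^σ(z0, n, z) = Σ_{s ∈ z} P^n(s0, s). -/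
open scoped BigOperators

namespace TR

variable {S A : Type} [Fintype S] [Fintype A] [DecidableEq S] [DecidableEq A]

/-! ### Auxiliary material for Statement 13 -/

/-- Finset of lists of a given length over a fintype. -/
def listsLen (X : Type) [Fintype X] [DecidableEq X] : ℕ → Finset (List X)
  | 0 => {[]}
  | n + 1 => (Finset.univ ×ˢ listsLen X n).image (fun p => p.1 :: p.2)

lemma mem_listsLen {X : Type} [Fintype X] [DecidableEq X] :
    ∀ {n : ℕ} {l : List X}, l ∈ listsLen X n ↔ l.length = n := by
  intro n
  induction n with
  | zero => intro l; simp [listsLen, List.length_eq_zero_iff]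
  | succ n ih =>
    intro l
    simp only [listsLen, Finset.mem_image, Finset.mem_product, Finset.mem_univ, true_and]
    constructor
    · rintro ⟨⟨x, rest⟩, hr, rfl⟩
      simp [ih.mp hr]
    · intro h
      cases l with
      | nil => simp at h
      | cons x rest => exact ⟨(x, rest), ih.mpr (by simpa using h), rfl⟩

lemma sum_listsLen_succ {X : Type} [Fintype X] [DecidableEq X] (n : ℕ) (f : List X → ℝ) :
    ∑ l ∈ listsLen X (n + 1), f l = ∑ x : X, ∑ l ∈ listsLen X n, f (x :: l) := by
  rw [listsLen, Finset.sum_image, Finset.sum_product]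
  rintro ⟨x, l⟩ _ ⟨y, m⟩ _ h
  obtain ⟨h1, h2⟩ := List.cons.inj h
  cases h1; cases h2; rfl

lemma hrHistProb_eq_zero_of_length {S A : Type} [Fintype S] [Fintype A]
    [DecidableEq S] [DecidableEq A]
    (P : S → A → S → ℝ) (sch : List (S × A) × S → A → ℝ) (s0 : S) :
    ∀ (n : ℕ) (l : List (S × A)) (s : S), l.length ≠ n →
      hrHistProb P sch s0 n (l, s) = 0 := by
  intro n
  induction n with
  | zero =>
    intro l s hl
    have : l ≠ [] := by intro h; exact hl (by simp [h])
    simp [hrHistProb, this]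
  | succ n ih =>
    intro l s hl
    cases l with
    | nil => simp [hrHistProb]
    | cons p rest =>
      obtain ⟨z, a⟩ := p
      have : rest.length ≠ n := by
        intro h; exact hl (by simp [h])
      simp [hrHistProb, ih rest z this]

lemma hrProb_eq_sum {S A : Type} [Fintype S] [Fintype A] [DecidableEq S] [DecidableEq A]
    (P : S → A → S → ℝ) (sch : List (S × A) × S → A → ℝ) (s0 : S) (n : ℕ) (s : S) :
    hrProb P sch s0 n s = ∑ l ∈ listsLen (S × A) n, hrHistProb P sch s0 n (l, s) := by
  apply tsum_eq_sum
  intro l hl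
  exact hrHistProb_eq_zero_of_length P sch s0 n l s (fun h => hl (mem_listsLen.mpr h))

/-- Uniform distribution on a block. -/
noncomputable def unifOn {S : Type} [Fintype S] [DecidableEq S]
    {part : Finset (Finset S)} (z : {z // z ∈ part}) (a : S) : ℝ :=
  if a ∈ z.1 then (z.1.card : ℝ)⁻¹ else 0

/-- The HR scheduler used in Statement 13. -/
noncomputable def mySch {S : Type} [Fintype S] [DecidableEq S]
    (P : S → S → ℝ) (part : Finset (Finset S)) (s0 : S) (z0 : {z // z ∈ part}) :
    List ({z // z ∈ part} × S) × {z // z ∈ part} → S → ℝ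
  | ([], z), a => if z = z0 then (if a = s0 then 1 else 0) else unifOn z a
  | ((zp, ap) :: _, z), a =>
      if 0 < abst P part zp ap z then
        (if a ∈ z.1 then P ap a / abst P part zp ap z else 0)
      else unifOn z a

lemma sum_partition {S : Type} [Fintype S] [DecidableEq S]
    {part : Finset (Finset S)} (hpart : IsPartition part) (g : S → ℝ) :
    ∑ z : {z // z ∈ part}, ∑ s ∈ z.1, g s = ∑ s, g s := by
  rw [Finset.sum_coe_sort part (fun z => ∑ s ∈ z, g s)]
  rw [← Finset.sum_biUnion (fun z hz z' hz' hne => hpart.2.2 z hz z' hz' hne)]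
  congr 1
  ext s
  simp only [Finset.mem_biUnion, Finset.mem_univ, iff_true, id]
  exact hpart.2.1 s

lemma block_unique {S : Type} [Fintype S] [DecidableEq S]
    {part : Finset (Finset S)} (hpart : IsPartition part)
    {z z' : {z // z ∈ part}} {a : S} (h : a ∈ z.1) (h' : a ∈ z'.1) : z = z' := by
  by_contra hne
  have hdisj := hpart.2.2 z.1 z.2 z'.1 z'.2 (fun he => hne (Subtype.ext he))
  exact (Finset.disjoint_left.mp hdisj) h h'

/-- the abstraction DTMDP has an HR scheduler whose transient
probabilities match the lumped transient probabilities of the concrete DTMC. -/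
theorem stmt13 {S : Type} [Fintype S] [DecidableEq S]
    (P : S → S → ℝ) (hnn : ∀ s s', 0 ≤ P s s') (hrow : ∀ s, ∑ s', P s s' = 1)
    (part : Finset (Finset S)) (hpart : IsPartition part)
    (s0 : S) (z0 : {z // z ∈ part}) (hs0 : s0 ∈ z0.1) :
    ∃ sch : List ({z // z ∈ part} × S) × {z // z ∈ part} → S → ℝ,
      IsHR (abst P part) sch ∧
      ∀ (n : ℕ) (z : {z // z ∈ part}),
        hrProb (abst P part) sch z0 n z = ∑ s ∈ z.1, matPow P n s0 s := by
  classical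
  choose blk hblk1 hblk2 using hpart.2.1
  have habst_nn : ∀ (z : {z // z ∈ part}) (a : S) (z' : {z // z ∈ part}),
      0 ≤ abst P part z a z' := by
    intro z a z'
    unfold abst
    split
    · exact Finset.sum_nonneg fun s _ => hnn a s
    · exact le_refl 0
  have hcard : ∀ z : {z // z ∈ part}, (0 : ℝ) < (z.1.card : ℝ) := by
    intro z
    exact_mod_cast Finset.card_pos.mpr (hpart.1 z.1 z.2)
  have hunif_nn : ∀ (z : {z // z ∈ part}) (a : S), 0 ≤ unifOn z a := by
    intro z a
    unfold unifOn
    split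
    · positivity
    · exact le_refl 0
  have hunif_sum : ∀ z : {z // z ∈ part}, ∑ a, unifOn z a = 1 := by
    intro z
    unfold unifOn
    rw [Finset.sum_ite_mem, Finset.univ_inter, Finset.sum_const, nsmul_eq_mul]
    exact mul_inv_cancel₀ (ne_of_gt (hcard z))
  have habst_sum : ∀ (z : {z // z ∈ part}) (a : S), a ∈ z.1 →
      ∑ z', abst P part z a z' = 1 := by
    intro z a ha
    unfold abst
    simp only [if_pos ha]
    rw [sum_partition hpart (P a)]
    exact hrow a
  have habst_mem : ∀ (z : {z // z ∈ part}) (a : S) (z' : {z // z ∈ part}),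
      0 < abst P part z a z' → a ∈ z.1 := by
    intro z a z' h
    by_contra hm
    rw [abst, if_neg hm] at h
    exact lt_irrefl 0 h
  -- support of the scheduler
  have hsupp : ∀ (l : List ({z // z ∈ part} × S)) (z : {z // z ∈ part}) (a : S),
      mySch P part s0 z0 (l, z) a ≠ 0 → a ∈ z.1 := by
    intro l z a h
    match l with
    | [] =>
      by_cases hz : z = z0
      · by_cases ha : a = s0
        · subst hz; subst ha; exact hs0
        · exact absurd (by simp [mySch, hz, ha]) h
      · by_cases ha : a ∈ z.1
        · exact ha
        · exact absurd (by simp [mySch, hz, unifOn, ha]) h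
    | (zp, ap) :: rest =>
      by_cases ha : a ∈ z.1
      · exact ha
      · refine absurd ?_ h
        by_cases hd : 0 < abst P part zp ap z
        · simp [mySch, hd, ha]
        · simp [mySch, hd, unifOn, ha]
  have hsch_nn : ∀ (h : List ({z // z ∈ part} × S) × {z // z ∈ part}) (a : S),
      0 ≤ mySch P part s0 z0 h a := by
    rintro ⟨l, z⟩ a
    match l with
    | [] =>
      by_cases hz : z = z0
      · simp only [mySch, if_pos hz]
        split <;> norm_num
      · simp only [mySch, if_neg hz]
        exact hunif_nn z a
    | (zp, ap) :: rest =>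
      by_cases hd : 0 < abst P part zp ap z
      · simp only [mySch, if_pos hd]
        split
        · exact div_nonneg (hnn ap a) (le_of_lt hd)
        · exact le_refl 0
      · simp only [mySch, if_neg hd]
        exact hunif_nn z a
  have hsch_sum : ∀ (h : List ({z // z ∈ part} × S) × {z // z ∈ part}),
      ∑ a, mySch P part s0 z0 h a = 1 := by
    rintro ⟨l, z⟩
    match l with
    | [] =>
      by_cases hz : z = z0
      · simp [mySch, if_pos hz]
      · simp only [mySch, if_neg hz]
        exact hunif_sum z
    | (zp, ap) :: rest =>
      by_cases hd : 0 < abst P part zp ap z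
      · simp only [mySch, if_pos hd]
        have hmem : ap ∈ zp.1 := habst_mem zp ap z hd
        have habs : abst P part zp ap z = ∑ s' ∈ z.1, P ap s' := by
          rw [abst, if_pos hmem]
        rw [Finset.sum_ite_mem, Finset.univ_inter, ← Finset.sum_div, ← habs]
        exact div_self (ne_of_gt hd)
      · simp only [mySch, if_neg hd]
        exact hunif_sum z
  -- scheduler step on nonempty histories
  have hsch_cons : ∀ (rest : List ({z // z ∈ part} × S)) (zp : {z // z ∈ part}) (ap : S)
      (z : {z // z ∈ part}) (a : S),
      mySch P part s0 z0 ((zp, ap) :: rest, z) a =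
        (if 0 < abst P part zp ap z then
          (if a ∈ z.1 then P ap a / abst P part zp ap z else 0)
        else unifOn z a) := fun _ _ _ _ _ => rfl
  -- vanishing of `K` outside the block
  have Kzero : ∀ (n : ℕ) (z : {z // z ∈ part}) (a : S), a ∉ z.1 →
      ∑ l ∈ listsLen ({z // z ∈ part} × S) n,
        hrHistProb (abst P part) (mySch P part s0 z0) z0 n (l, z) *
          mySch P part s0 z0 (l, z) a = 0 := by
    intro n z a ha
    refine Finset.sum_eq_zero fun l _ => ?_
    have : mySch P part s0 z0 (l, z) a = 0 := by
      by_contra h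
      exact ha (hsupp l z a h)
    rw [this, mul_zero]
  -- the key invariant
  have key : ∀ (n : ℕ) (z : {z // z ∈ part}) (a : S), a ∈ z.1 →
      ∑ l ∈ listsLen ({z // z ∈ part} × S) n,
        hrHistProb (abst P part) (mySch P part s0 z0) z0 n (l, z) *
          mySch P part s0 z0 (l, z) a = matPow P n s0 a := by
    intro n
    induction n with
    | zero =>
      intro z a ha
      by_cases hz : z = z0
      · subst hz
        by_cases has : a = s0
        · simp [listsLen, hrHistProb, matPow, mySch, has]
        · have h2 : ¬ s0 = a := fun h => has h.symm
          simp [listsLen, hrHistProb, matPow, mySch, has, h2]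
      · have h2 : ¬ s0 = a := fun h => hz (block_unique hpart (h ▸ ha) hs0)
        simp [listsLen, hrHistProb, matPow, mySch, hz, h2]
    | succ n ih =>
      intro z' a' ha'
      rw [sum_listsLen_succ n (fun l =>
        hrHistProb (abst P part) (mySch P part s0 z0) z0 (n + 1) (l, z') *
          mySch P part s0 z0 (l, z') a')]
      rw [Fintype.sum_prod_type]
      have hterm : ∀ (z : {z // z ∈ part}) (a : S),
          ∑ l ∈ listsLen ({z // z ∈ part} × S) n,
            hrHistProb (abst P part) (mySch P part s0 z0) z0 (n + 1) ((z, a) :: l, z') *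
              mySch P part s0 z0 ((z, a) :: l, z') a' =
          (if a ∈ z.1 then matPow P n s0 a * P a a' else 0) := by
        intro z a
        have hrw : ∀ l : List ({z // z ∈ part} × S),
            hrHistProb (abst P part) (mySch P part s0 z0) z0 (n + 1) ((z, a) :: l, z') *
              mySch P part s0 z0 ((z, a) :: l, z') a' =
            (hrHistProb (abst P part) (mySch P part s0 z0) z0 n (l, z) *
              mySch P part s0 z0 (l, z) a) *
            (abst P part z a z' *
              (if 0 < abst P part z a z' then
                (if a' ∈ z'.1 then P a a' / abst P part z a z' else 0)
              else unifOn z' a')) := by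
          intro l
          rw [hsch_cons]
          show hrHistProb (abst P part) (mySch P part s0 z0) z0 n (l, z) *
              mySch P part s0 z0 (l, z) a * abst P part z a z' * _ = _
          ring
        simp only [hrw, ← Finset.sum_mul]
        by_cases ha : a ∈ z.1
        · rw [ih z a ha, if_pos ha]
          by_cases hd : 0 < abst P part z a z'
          · rw [if_pos hd, if_pos ha', mul_div_assoc']
            rw [mul_comm (abst P part z a z') (P a a'), mul_div_assoc]
            rw [div_self (ne_of_gt hd), mul_one]
          · have hd0 : abst P part z a z' = 0 :=
              le_antisymm (not_lt.mp hd) (habst_nn z a z')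
            have hPa : P a a' = 0 := by
              have := hd0
              rw [abst, if_pos ha] at this
              have := (Finset.sum_eq_zero_iff_of_nonneg
                (fun s _ => hnn a s)).mp this
              exact this a' ha'
            rw [hd0, zero_mul, mul_zero, hPa, mul_zero]
        · rw [Kzero n z a ha, zero_mul, if_neg ha]
      simp only [hterm]
      rw [Finset.sum_comm]
      have hone : ∀ a : S,
          ∑ z : {z // z ∈ part}, (if a ∈ z.1 then matPow P n s0 a * P a a' else 0) =
            matPow P n s0 a * P a a' := by
        intro a
        rw [Finset.sum_eq_single (⟨blk a, hblk1 a⟩ : {z // z ∈ part})]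
        · exact if_pos (hblk2 a)
        · intro z _ hne
          refine if_neg fun hmem => ?_
          exact hne (block_unique hpart hmem (hblk2 a))
        · intro h
          exact absurd (Finset.mem_univ _) h
      simp only [hone]
      rfl
  refine ⟨mySch P part s0 z0, ⟨hsch_nn, hsch_sum, ?_⟩, ?_⟩
  · rintro ⟨l, z⟩ a hpos
    exact habst_sum z a (hsupp l z a (ne_of_gt hpos))
  · intro n z
    rw [hrProb_eq_sum]
    have : ∀ l ∈ listsLen ({z // z ∈ part} × S) n,
        hrHistProb (abst P part) (mySch P part s0 z0) z0 n (l, z) =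
          ∑ a, hrHistProb (abst P part) (mySch P part s0 z0) z0 n (l, z) *
            mySch P part s0 z0 (l, z) a := by
      intro l _
      rw [← Finset.mul_sum, hsch_sum (l, z), mul_one]
    rw [Finset.sum_congr rfl this, Finset.sum_comm]
    have : ∀ a : S,
        ∑ l ∈ listsLen ({z // z ∈ part} × S) n,
          hrHistProb (abst P part) (mySch P part s0 z0) z0 n (l, z) *
            mySch P part s0 z0 (l, z) a =
        (if a ∈ z.1 then matPow P n s0 a else 0) := by
      intro a
      by_cases ha : a ∈ z.1
      · rw [key n z a ha, if_pos ha]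
      · rw [Kzero n z a ha, if_neg ha]
    rw [Finset.sum_congr rfl fun a _ => this a, Finset.sum_ite_mem, Finset.univ_inter]

end TR
end
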